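/- For each clause type i ∈ {1, 2, 3, 4}: if (φ*, φ_λ*) ∈ ℝ³ × ℝ is a saddle point of the Lagrange function L_i, i.e., L_i(φ*, φ_λ) ≤ L_i(φ*, φ_λ*) ≤ L_i(φ, φ_λ*) for all φ ∈ ℝ³ and all φ_λ ∈ ℝ, then the constraint is satisfied at φ*: Z_i(φ*) = 0. -/

import Mathlib

/-- Complex clause energy Z_1 for the clause X ∨ Y ∨ Z, with φ = (p 0, p 1, p 2). -/
noncomputable def Zclause1 (p : Fin 3 → ℝ) : ℂ :=
  1
    + Complex.exp (Complex.I * ((p 0 : ℂ) - (p 1 : ℂ)))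
    + Complex.exp (Complex.I * ((p 0 : ℂ) - (p 2 : ℂ)))
    + Complex.exp (Complex.I * ((p 2 : ℂ) - (p 1 : ℂ)))
    - Complex.exp (Complex.I * (p 0 : ℂ))
    - Complex.exp (Complex.I * (p 1 : ℂ))
    - Complex.exp (Complex.I * (p 2 : ℂ))
    - Complex.exp (Complex.I * ((p 0 : ℂ) - (p 1 : ℂ) + (p 2 : ℂ)))

/-- Complex clause energy Z_2 for the clause ¬X ∨ Y ∨ Z. -/
noncomputable def Zclause2 (p : Fin 3 → ℝ) : ℂ :=
  1
    - Complex.exp (Complex.I * ((p 0 : ℂ) - (p 1 : ℂ)))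
    - Complex.exp (Complex.I * ((p 0 : ℂ) - (p 2 : ℂ)))
    + Complex.exp (Complex.I * ((p 2 : ℂ) - (p 1 : ℂ)))
    + Complex.exp (Complex.I * (p 0 : ℂ))
    - Complex.exp (Complex.I * (p 1 : ℂ))
    - Complex.exp (Complex.I * (p 2 : ℂ))
    + Complex.exp (Complex.I * ((p 0 : ℂ) - (p 1 : ℂ) + (p 2 : ℂ)))

/-- Complex clause energy Z_3 for the clause ¬X ∨ ¬Y ∨ Z. -/
noncomputable def Zclause3 (p : Fin 3 → ℝ) : ℂ :=
  1
    + Complex.exp (Complex.I * ((p 0 : ℂ) - (p 1 : ℂ)))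
    - Complex.exp (Complex.I * ((p 0 : ℂ) - (p 2 : ℂ)))
    - Complex.exp (Complex.I * ((p 2 : ℂ) - (p 1 : ℂ)))
    + Complex.exp (Complex.I * (p 0 : ℂ))
    + Complex.exp (Complex.I * (p 1 : ℂ))
    - Complex.exp (Complex.I * (p 2 : ℂ))
    - Complex.exp (Complex.I * ((p 0 : ℂ) - (p 1 : ℂ) + (p 2 : ℂ)))

/-- Complex clause energy Z_4 for the clause ¬X ∨ ¬Y ∨ ¬Z. -/
noncomputable def Zclause4 (p : Fin 3 → ℝ) : ℂ :=
  1
    + Complex.exp (Complex.I * ((p 0 : ℂ) - (p 1 : ℂ)))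
    + Complex.exp (Complex.I * ((p 0 : ℂ) - (p 2 : ℂ)))
    + Complex.exp (Complex.I * ((p 2 : ℂ) - (p 1 : ℂ)))
    + Complex.exp (Complex.I * (p 0 : ℂ))
    + Complex.exp (Complex.I * (p 1 : ℂ))
    + Complex.exp (Complex.I * (p 2 : ℂ))
    + Complex.exp (Complex.I * ((p 0 : ℂ) - (p 1 : ℂ) + (p 2 : ℂ)))

/-- The clause energy of clause type i ∈ {1, 2, 3, 4} (indexed by `Fin 4`, so
`ZclauseType 0 = Z_1`, …, `ZclauseType 3 = Z_4`). -/
noncomputable def ZclauseType (i : Fin 4) : (Fin 3 → ℝ) → ℂ :=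
  ![Zclause1, Zclause2, Zclause3, Zclause4] i

/-- Lagrange function L_i(φ, φ_λ) = cos φ_λ · Re Z_i(φ) + sin φ_λ · Im Z_i(φ). -/
noncomputable def Lag (i : Fin 4) (p : Fin 3 → ℝ) (lam : ℝ) : ℝ :=
  Real.cos lam * (ZclauseType i p).re + Real.sin lam * (ZclauseType i p).im

lemma Zclause_exists_zero (i : Fin 4) : ∃ p : Fin 3 → ℝ, ZclauseType i p = 0 := by
  fin_cases i
  · exact ⟨fun _ => 0, by simp [ZclauseType, Zclause1]⟩
  · exact ⟨fun _ => 0, by simp [ZclauseType, Zclause2]⟩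
  · exact ⟨fun _ => 0, by simp [ZclauseType, Zclause3]⟩
  · refine ⟨![Real.pi, 0, 0], ?_⟩
    simp [ZclauseType, Zclause4, mul_comm Complex.I, Complex.exp_pi_mul_I]

/-- for each clause type i, any saddle point (φ*, φ_λ*) of the Lagrange
function L_i satisfies the constraint Z_i(φ*) = 0. -/
theorem saddle_point_satisfies_constraint (i : Fin 4) (ps : Fin 3 → ℝ) (lams : ℝ)
    (hsaddle₁ : ∀ lam : ℝ, Lag i ps lam ≤ Lag i ps lams)
    (hsaddle₂ : ∀ p : Fin 3 → ℝ, Lag i ps lams ≤ Lag i p lams) :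
    ZclauseType i ps = 0 := by
  by_contra hne
  set Z := ZclauseType i ps with hZ
  obtain ⟨p₀, hp₀⟩ := Zclause_exists_zero i
  have h2 : Lag i ps lams ≤ 0 := by
    have := hsaddle₂ p₀
    simpa [Lag, hp₀] using this
  have h1 : ‖Z‖ ≤ Lag i ps lams := by
    have := hsaddle₁ (Complex.arg Z)
    have heq : Lag i ps (Complex.arg Z) = ‖Z‖ := by
      have habs : ‖Z‖ ≠ 0 := norm_ne_zero_iff.mpr hne
      rw [Lag, ← hZ, Complex.cos_arg hne, Complex.sin_arg]
      field_simp
      rw [Complex.sq_norm, Complex.normSq_apply]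
      ring
    linarith [this, heq.symm.le]
  have : ‖Z‖ ≤ 0 := le_trans h1 h2
  exact hne (by simpa using norm_eq_zero.mp (le_antisymm this (norm_nonneg Z)))
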